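/- (Test-score moment under AR(1) skills.) Suppose skills follow an AR(1) process: θ_t = ρ·θ_{t−1} + ν_t for every integer t, with cov(θ_{t'}, ν_t) = 0 whenever t > t'. Suppose the measurement errors satisfy cov(η_t, θ_s) = 0 and cov(η_t, ν_s) = 0 for all integers t, s, and cov(η_t, η_s) = 0 for all t ≠ s. Then for every integer t and every integer ℓ ≥ 1, cov( T̃_{t+2} − ρ²·T̃_t , T̃_{t−ℓ} ) = 0; equivalently, cov( T̃_{t+2} − T̃_t − ϱ·T̃_t , T̃_{t−ℓ} ) = 0 with ϱ := ρ² − 1. -/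

import Mathlib

/-!
Iterating the AR(1) recursion twice gives
`T̃_{t+2} − ρ² T̃_t = τ (ν_{t+2} + ρ ν_{t+1}) + η_{t+2} − ρ² η_t`.
Each summand is uncorrelated with both `θ_{t−ℓ}` and `η_{t−ℓ}` (the innovations are dated after
`t − ℓ`, the errors at dates other than `t − ℓ`), hence with `T̃_{t−ℓ} = τ θ_{t−ℓ} + η_{t−ℓ}`.
-/

open MeasureTheory ProbabilityTheory

/-- Covariance of two real-valued random variables under measure `P`. -/
noncomputable def cov {Ω : Type*} [MeasurableSpace Ω] (P : Measure Ω) (X Y : Ω → ℝ) : ℝ :=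
  ∫ ω, (X ω - ∫ a, X a ∂P) * (Y ω - ∫ a, Y a ∂P) ∂P

/-- Variance of a real-valued random variable under measure `P`. -/
noncomputable def Var {Ω : Type*} [MeasurableSpace Ω] (P : Measure Ω) (X : Ω → ℝ) : ℝ :=
  cov P X X

section

variable {Ω : Type*} [MeasurableSpace Ω] {P : Measure Ω}

lemma cov_eq_covariance (X Y : Ω → ℝ) : cov P X Y = cov[X, Y; P] := rfl

lemma covariance_const_mul_add_right_eq_zero [IsFiniteMeasure P] {Z X Y : Ω → ℝ}
    (hZ : MemLp Z 2 P) (hX : MemLp X 2 P) (hY : MemLp Y 2 P) (a : ℝ)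
    (hZX : cov[Z, X; P] = 0) (hZY : cov[Z, Y; P] = 0) :
    cov[Z, fun ω ↦ a * X ω + Y ω; P] = 0 := by
  rw [show (fun ω ↦ a * X ω + Y ω) = a • X + Y from rfl,
    covariance_add_right hZ (hX.const_smul a) hY, covariance_smul_right, hZX, hZY]
  ring

end

lemma ar1_two_step {α : Type*} {θ ν : ℤ → α → ℝ} {ρ : ℝ}
    (hAR : ∀ t ω, θ t ω = ρ * θ (t - 1) ω + ν t ω) (t : ℤ) (ω : α) :
    θ (t + 2) ω = ρ ^ 2 * θ t ω + (ρ * ν (t + 1) ω + ν (t + 2) ω) := by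
  have h₂ := hAR (t + 2) ω
  have h₁ := hAR (t + 1) ω
  rw [show t + 2 - 1 = t + 1 by ring] at h₂
  rw [show t + 1 - 1 = t by ring] at h₁
  rw [h₂, h₁]
  ring

/-- Test-score moment under AR(1) skills: if `θ t = ρ * θ (t−1) + ν t` with the stated
orthogonality conditions, then `cov (T̃ (t+2) − ρ² T̃ t) (T̃ (t−ℓ)) = 0` for `ℓ ≥ 1`;
equivalently, `cov (T̃ (t+2) − T̃ t − ϱ T̃ t) (T̃ (t−ℓ)) = 0` with `ϱ = ρ² − 1`. -/
theorem AR1_test_score_moment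
    {Ω : Type*} [MeasurableSpace Ω] (P : Measure Ω) [IsProbabilityMeasure P]
    (θ ν : ℤ → Ω → ℝ) (ρ : ℝ)
    (hθ : ∀ t, MemLp (θ t) 2 P) (hν : ∀ t, MemLp (ν t) 2 P)
    (hAR : ∀ (t : ℤ) (ω : Ω), θ t ω = ρ * θ (t - 1) ω + ν t ω)
    (hθν : ∀ t t' : ℤ, t' < t → cov P (θ t') (ν t) = 0)
    (τ : ℝ) (η : ℤ → Ω → ℝ) (hη : ∀ t, MemLp (η t) 2 P)
    (T : ℤ → Ω → ℝ) (hT : ∀ t ω, T t ω = τ * θ t ω + η t ω)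
    (hηθ : ∀ t s : ℤ, cov P (η t) (θ s) = 0)
    (hην : ∀ t s : ℤ, cov P (η t) (ν s) = 0)
    (hηη : ∀ t s : ℤ, t ≠ s → cov P (η t) (η s) = 0) :
    ∀ t : ℤ, ∀ ℓ : ℤ, 1 ≤ ℓ →
      cov P (fun ω => T (t + 2) ω - ρ ^ 2 * T t ω) (T (t - ℓ)) = 0 ∧
        cov P (fun ω => T (t + 2) ω - T t ω - (ρ ^ 2 - 1) * T t ω) (T (t - ℓ)) = 0 := by
  intro t ℓ hℓ
  simp only [cov_eq_covariance] at *
  have hT' : ∀ s, T s = fun ω ↦ τ * θ s ω + η s ω := fun s ↦ funext (hT s)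
  have innovation : ∀ u, t - ℓ < u → cov[ν u, T (t - ℓ); P] = 0 := fun u hu ↦ by
    rw [hT']
    exact covariance_const_mul_add_right_eq_zero (hν u) (hθ _) (hη _) τ
      (by rw [covariance_comm]; exact hθν u _ hu) (by rw [covariance_comm]; exact hην _ u)
  have noise : ∀ u, u ≠ t - ℓ → cov[η u, T (t - ℓ); P] = 0 := fun u hu ↦ by
    rw [hT']
    exact covariance_const_mul_add_right_eq_zero (hη u) (hθ _) (hη _) τ (hηθ u _) (hηη u _ hu)
  have decomp : (fun ω ↦ T (t + 2) ω - ρ ^ 2 * T t ω)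
      = τ • ν (t + 2) + (ρ * τ) • ν (t + 1) + (η (t + 2) - ρ ^ 2 • η t) := by
    ext ω
    simp only [hT, ar1_two_step hAR, Pi.add_apply, Pi.sub_apply, Pi.smul_apply, smul_eq_mul]
    ring
  have hTs : MemLp (T (t - ℓ)) 2 P := hT' _ ▸ ((hθ _).const_mul τ).add (hη _)
  have moment : cov[fun ω ↦ T (t + 2) ω - ρ ^ 2 * T t ω, T (t - ℓ); P] = 0 := by
    rw [decomp, covariance_add_left (((hν _).const_smul τ).add ((hν _).const_smul _))
        ((hη _).sub ((hη _).const_smul _)) hTs,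
      covariance_add_left ((hν _).const_smul τ) ((hν _).const_smul _) hTs,
      covariance_sub_left (hη _) ((hη _).const_smul _) hTs]
    simp only [covariance_smul_left, innovation _ (by omega : t - ℓ < t + 2),
      innovation _ (by omega : t - ℓ < t + 1), noise _ (by omega : t + 2 ≠ t - ℓ),
      noise _ (by omega : t ≠ t - ℓ)]
    ring
  refine ⟨moment, ?_⟩
  convert moment using 3 with ω
  ring
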